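/- Let Φ : I → ℝ be a convex function on an interval I of positive real numbers, let T, V be bounded linear invertible operators on a complex Hilbert space H, and let 0 < m < M with [m², M²] contained in the interior of I and m‖Tx‖ ≤ ‖Vx‖ ≤ M‖Tx‖ for all x ∈ H. Then for every subgradient selection φ of Φ, every x ∈ H with x ≠ 0, and every y ∈ H, writing r := ‖Vx‖²/‖Tx‖², one has ⟨⊙_Φ(V,T)y, y⟩ ≥ Φ(r)‖Ty‖² + φ(r)(‖Vy‖² − r‖Ty‖²). -/

import Mathlib

variable {H : Type*} [NormedAddCommGroup H] [InnerProductSpace ℂ H] [CompleteSpace H]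

/-- `X = |VT⁻¹|² = (T*)⁻¹ V* V T⁻¹`. -/
noncomputable def qX (V T : (H →L[ℂ] H)ˣ) : H →L[ℂ] H :=
  star (↑(T⁻¹) : H →L[ℂ] H) * (star (V : H →L[ℂ] H) * (V : H →L[ℂ] H)) * (↑(T⁻¹) : H →L[ℂ] H)

/-- The quadratic operator perspective `⊙_Φ(V,T) = T* Φ(X) T`. -/
noncomputable def qPersp (Φ : ℝ → ℝ) (V T : (H →L[ℂ] H)ˣ) : H →L[ℂ] H :=
  star (T : H →L[ℂ] H) * cfc Φ (qX V T) * (T : H →L[ℂ] H)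

/-- `|T|² = T*T`. -/
noncomputable def modSq (T : (H →L[ℂ] H)ˣ) : H →L[ℂ] H :=
  star (T : H →L[ℂ] H) * (T : H →L[ℂ] H)

/-!
Write `X = |V T⁻¹|²`. The norm bounds place both the spectrum of `X` and the ratio `r` in
`[m², M²] ⊆ interior I`, where `Φ` lies above its supporting line `t ↦ Φ r + (t - r) φ r`.
Monotonicity of the functional calculus gives `Φ(X) ≥ Φ r + φ r (X - r)`; conjugating by `T`
(note `T* X T = V* V`) yields `⊙_Φ(V,T) ≥ Φ r |T|² + φ r (|V|² - r |T|²)`, and the claim is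
the quadratic form of this operator inequality at `y`.
-/

lemma sq_div_sq_mem_Icc {a b m M : ℝ} (hm : 0 ≤ m) (hb : 0 < b) (hlow : m * b ≤ a)
    (hupp : a ≤ M * b) : a ^ 2 / b ^ 2 ∈ Set.Icc (m ^ 2) (M ^ 2) := by
  constructor
  · rw [le_div_iff₀ (by positivity), ← mul_pow]
    exact pow_le_pow_left₀ (by positivity) hlow 2
  · rw [div_le_iff₀ (by positivity), ← mul_pow]
    exact pow_le_pow_left₀ ((mul_nonneg hm hb.le).trans hlow) hupp 2

section CFC

variable {A : Type*} [TopologicalSpace A] [Ring A] [StarRing A] [PartialOrder A]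
  [StarOrderedRing A] [Algebra ℝ A] [ContinuousFunctionalCalculus ℝ A IsSelfAdjoint]

lemma algebraMap_add_smul_sub_le_cfc {a : A} (ha : IsSelfAdjoint a) {f : ℝ → ℝ}
    (hf : ContinuousOn f (spectrum ℝ a)) {r d : ℝ}
    (h : ∀ t ∈ spectrum ℝ a, f r + (t - r) * d ≤ f t) :
    algebraMap ℝ A (f r) + d • (a - algebraMap ℝ A r) ≤ cfc f a := by
  have hline : cfc (fun t => (f r - r * d) + d * t) a
      = algebraMap ℝ A (f r) + d • (a - algebraMap ℝ A r) := by
    rw [cfc_const_add _ _ _ (by fun_prop), cfc_const_mul_id _ _ ha, smul_sub,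
      Algebra.smul_def d (algebraMap ℝ A r), ← map_mul, map_sub, mul_comm r d]
    abel
  rw [← hline]
  exact cfc_mono (fun t ht => by linarith [h t ht]) (by fun_prop) hf

end CFC

namespace ContinuousLinearMap

variable {E : Type*} [NormedAddCommGroup E] [InnerProductSpace ℂ E]

lemma reApplyInnerSelf_mono {S T : E →L[ℂ] E} (h : S ≤ T) (x : E) :
    S.reApplyInnerSelf x ≤ T.reApplyInnerSelf x := by
  have := h.re_inner_nonneg_left x
  rw [sub_apply, inner_sub_left, map_sub] at this
  exact sub_nonneg.mp this

lemma reApplyInnerSelf_add (S T : E →L[ℂ] E) (x : E) :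
    (S + T).reApplyInnerSelf x = S.reApplyInnerSelf x + T.reApplyInnerSelf x := by
  simp only [reApplyInnerSelf_apply, add_apply, inner_add_left, map_add]

lemma reApplyInnerSelf_sub (S T : E →L[ℂ] E) (x : E) :
    (S - T).reApplyInnerSelf x = S.reApplyInnerSelf x - T.reApplyInnerSelf x := by
  simp only [reApplyInnerSelf_apply, sub_apply, inner_sub_left, map_sub]

lemma reApplyInnerSelf_real_smul (c : ℝ) (T : E →L[ℂ] E) (x : E) :
    (c • T).reApplyInnerSelf x = c * T.reApplyInnerSelf x := by
  rw [reApplyInnerSelf_apply, reApplyInnerSelf_apply, smul_apply,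
    inner_smul_left_eq_smul, RCLike.smul_re]

lemma reApplyInnerSelf_algebraMap (c : ℝ) (x : E) :
    (algebraMap ℝ (E →L[ℂ] E) c).reApplyInnerSelf x = c * ‖x‖ ^ 2 := by
  rw [Algebra.algebraMap_eq_smul_one, reApplyInnerSelf_real_smul, reApplyInnerSelf_apply,
    one_apply_eq_self, inner_self_eq_norm_sq]

variable [CompleteSpace E]

lemma reApplyInnerSelf_star_mul_self (A : E →L[ℂ] E) (x : E) :
    (star A * A).reApplyInnerSelf x = ‖A x‖ ^ 2 :=
  (apply_norm_sq_eq_inner_adjoint_left A x).symm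

lemma algebraMap_le_iff_forall_le_reApplyInnerSelf {T : E →L[ℂ] E} (hT : IsSelfAdjoint T)
    (c : ℝ) : algebraMap ℝ (E →L[ℂ] E) c ≤ T ↔ ∀ x, c * ‖x‖ ^ 2 ≤ T.reApplyInnerSelf x := by
  simp only [le_def, isPositive_def', hT.sub (.algebraMap _ (.all c)), true_and,
    reApplyInnerSelf_sub, reApplyInnerSelf_algebraMap, sub_nonneg]

lemma le_algebraMap_iff_forall_reApplyInnerSelf_le {T : E →L[ℂ] E} (hT : IsSelfAdjoint T)
    (c : ℝ) : T ≤ algebraMap ℝ (E →L[ℂ] E) c ↔ ∀ x, T.reApplyInnerSelf x ≤ c * ‖x‖ ^ 2 := by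
  simp only [le_def, isPositive_def', (IsSelfAdjoint.algebraMap _ (.all c)).sub hT, true_and,
    reApplyInnerSelf_sub, reApplyInnerSelf_algebraMap, sub_nonneg]

lemma spectrum_star_mul_self_subset_Icc {A : E →L[ℂ] E} {a b : ℝ} (ha : 0 ≤ a)
    (hab : ∀ x, a * ‖x‖ ≤ ‖A x‖ ∧ ‖A x‖ ≤ b * ‖x‖) :
    spectrum ℝ (star A * A) ⊆ Set.Icc (a ^ 2) (b ^ 2) := by
  have hA : IsSelfAdjoint (star A * A) := .star_mul_self A
  have hlow : algebraMap ℝ _ (a ^ 2) ≤ star A * A :=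
    (algebraMap_le_iff_forall_le_reApplyInnerSelf hA _).mpr fun x => by
      rw [reApplyInnerSelf_star_mul_self, ← mul_pow]
      exact pow_le_pow_left₀ (by positivity) (hab x).1 2
  have hupp : star A * A ≤ algebraMap ℝ _ (b ^ 2) :=
    (le_algebraMap_iff_forall_reApplyInnerSelf_le hA _).mpr fun x => by
      rw [reApplyInnerSelf_star_mul_self, ← mul_pow]
      exact pow_le_pow_left₀ (norm_nonneg _) (hab x).2 2
  exact fun t ht => ⟨(algebraMap_le_iff_le_spectrum hA).mp hlow t ht,
    (le_algebraMap_iff_spectrum_le hA).mp hupp t ht⟩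

end ContinuousLinearMap

open ContinuousLinearMap

lemma qX_eq_star_mul_self (V T : (H →L[ℂ] H)ˣ) :
    qX V T = star ((V : H →L[ℂ] H) * ↑T⁻¹) * ((V : H →L[ℂ] H) * ↑T⁻¹) := by
  simp only [qX, star_mul, mul_assoc]

lemma star_mul_qX_mul (V T : (H →L[ℂ] H)ˣ) : star (T : H →L[ℂ] H) * qX V T * T = modSq V := by
  have h : star (T : H →L[ℂ] H) * star ↑T⁻¹ = 1 := by rw [← star_mul, T.inv_mul, star_one]
  simp only [qX, modSq, ← mul_assoc, h, one_mul]
  rw [mul_assoc _ _ (T : H →L[ℂ] H), T.inv_mul, mul_one]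

lemma star_mul_algebraMap_mul (T : (H →L[ℂ] H)ˣ) (c : ℝ) :
    star (T : H →L[ℂ] H) * algebraMap ℝ (H →L[ℂ] H) c * T = c • modSq T := by
  rw [Algebra.algebraMap_eq_smul_one, mul_smul_comm, mul_one, smul_mul_assoc, modSq]

lemma reApplyInnerSelf_modSq (T : (H →L[ℂ] H)ˣ) (y : H) :
    (modSq T).reApplyInnerSelf y = ‖(T : H →L[ℂ] H) y‖ ^ 2 :=
  reApplyInnerSelf_star_mul_self _ y

lemma spectrum_qX_subset_Icc {V T : (H →L[ℂ] H)ˣ} {m M : ℝ} (hm : 0 ≤ m)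
    (hTV : ∀ x : H, m * ‖(T : H →L[ℂ] H) x‖ ≤ ‖(V : H →L[ℂ] H) x‖ ∧
      ‖(V : H →L[ℂ] H) x‖ ≤ M * ‖(T : H →L[ℂ] H) x‖) :
    spectrum ℝ (qX V T) ⊆ Set.Icc (m ^ 2) (M ^ 2) := by
  rw [qX_eq_star_mul_self]
  refine spectrum_star_mul_self_subset_Icc hm fun w => ?_
  have hw : (T : H →L[ℂ] H) ((↑T⁻¹ : H →L[ℂ] H) w) = w := congr($(T.mul_inv) w)
  simpa only [hw, mul_apply_eq_comp] using hTV ((↑T⁻¹ : H →L[ℂ] H) w)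

theorem smul_modSq_add_le_qPersp {Φ : ℝ → ℝ} {V T : (H →L[ℂ] H)ˣ} {r d : ℝ}
    (hΦ : ContinuousOn Φ (spectrum ℝ (qX V T)))
    (hline : ∀ t ∈ spectrum ℝ (qX V T), Φ r + (t - r) * d ≤ Φ t) :
    Φ r • modSq T + d • (modSq V - r • modSq T) ≤ qPersp Φ V T := by
  have hX : IsSelfAdjoint (qX V T) := qX_eq_star_mul_self V T ▸ .star_mul_self _
  have h := star_left_conjugate_le_conjugate
    (algebraMap_add_smul_sub_le_cfc hX hΦ hline) (T : H →L[ℂ] H)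
  rwa [mul_add, add_mul, mul_smul_comm, smul_mul_assoc, mul_sub, sub_mul, star_mul_qX_mul,
    star_mul_algebraMap_mul, star_mul_algebraMap_mul] at h

theorem stmt5_general (I : Set ℝ)
    (Φ : ℝ → ℝ) (hΦ : ConvexOn ℝ I Φ)
    (T V : (H →L[ℂ] H)ˣ) (m M : ℝ) (hm : 0 < m)
    (hsub : Set.Icc (m ^ 2) (M ^ 2) ⊆ interior I)
    (hTV : ∀ x : H, m * ‖(T : H →L[ℂ] H) x‖ ≤ ‖(V : H →L[ℂ] H) x‖ ∧ ‖(V : H →L[ℂ] H) x‖ ≤ M * ‖(T : H →L[ℂ] H) x‖)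
    (φ : ℝ → ℝ) (hφ : ∀ a ∈ interior I, ∀ t ∈ I, Φ a + (t - a) * φ a ≤ Φ t)
    (x : H) (hx : x ≠ 0) (r : ℝ) (hr : r = ‖(V : H →L[ℂ] H) x‖ ^ 2 / ‖(T : H →L[ℂ] H) x‖ ^ 2) (y : H) :
    Φ r * ‖(T : H →L[ℂ] H) y‖ ^ 2 + φ r * (‖(V : H →L[ℂ] H) y‖ ^ 2 - r * ‖(T : H →L[ℂ] H) y‖ ^ 2) ≤
      (inner ℂ ((qPersp Φ V T) y) y : ℂ).re := by
  have hspec : spectrum ℝ (qX V T) ⊆ interior I := (spectrum_qX_subset_Icc hm.le hTV).trans hsub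
  have hTx : 0 < ‖(T : H →L[ℂ] H) x‖ :=
    norm_pos_iff.mpr ((ContinuousLinearEquiv.unitsEquiv ℂ H T).map_ne_zero_iff.mpr hx)
  have hrI : r ∈ interior I :=
    hsub (hr ▸ sq_div_sq_mem_Icc hm.le hTx (hTV x).1 (hTV x).2)
  have hop := smul_modSq_add_le_qPersp (hΦ.continuousOn_interior.mono hspec)
    fun t ht => hφ r hrI t (interior_subset (hspec ht))
  have h := reApplyInnerSelf_mono hop y
  rwa [reApplyInnerSelf_add, reApplyInnerSelf_real_smul, reApplyInnerSelf_real_smul,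
    reApplyInnerSelf_sub, reApplyInnerSelf_real_smul, reApplyInnerSelf_modSq,
    reApplyInnerSelf_modSq] at h

theorem stmt5 (I : Set ℝ) (hIpos : I ⊆ Set.Ioi 0)
    (Φ : ℝ → ℝ) (hΦ : ConvexOn ℝ I Φ)
    (T V : (H →L[ℂ] H)ˣ) (m M : ℝ) (hm : 0 < m) (hmM : m < M)
    (hsub : Set.Icc (m ^ 2) (M ^ 2) ⊆ interior I)
    (hTV : ∀ x : H, m * ‖(T : H →L[ℂ] H) x‖ ≤ ‖(V : H →L[ℂ] H) x‖ ∧ ‖(V : H →L[ℂ] H) x‖ ≤ M * ‖(T : H →L[ℂ] H) x‖)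
    (φ : ℝ → ℝ) (hφ : ∀ a ∈ interior I, ∀ t ∈ I, Φ a + (t - a) * φ a ≤ Φ t)
    (x : H) (hx : x ≠ 0) (r : ℝ) (hr : r = ‖(V : H →L[ℂ] H) x‖ ^ 2 / ‖(T : H →L[ℂ] H) x‖ ^ 2) (y : H) :
    Φ r * ‖(T : H →L[ℂ] H) y‖ ^ 2 + φ r * (‖(V : H →L[ℂ] H) y‖ ^ 2 - r * ‖(T : H →L[ℂ] H) y‖ ^ 2) ≤
      (inner ℂ ((qPersp Φ V T) y) y : ℂ).re :=
  stmt5_general I Φ hΦ T V m M hm hsub hTV φ hφ x hx r hr y
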